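/- Let M be a rooted tree (an indecomposable object). Then every nonzero subspace of H_quot(M) that is stable under the elimination operator E_A for every rooted forest A contains φ_∅. Consequently H_quot(M) is indecomposable: if H_quot(M) = U ⊕ W with U and W subspaces each stable under all the operators E_A, then U = 0 or W = 0. -/

import Mathlib

open scoped Classical

/-- Concrete (labeled) rooted trees: a root with a list of subtrees. -/
inductive RTree : Type
  | node : List RTree → RTree

/-- Shapes of admissible cuts: at each tree, either the full cut
(everything, including the root, goes to the pruned part `P`), or a choice of
an admissible cut of each child subtree.  A `full` occurring strictly inside
corresponds to cutting the edge above that vertex. -/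
inductive CutShape : Type
  | full
  | branch : List CutShape → CutShape

namespace CK

/-- Number of vertices of a forest. -/
def sizeL : List RTree → ℕ
  | [] => 0
  | .node l :: ts => 1 + sizeL l + sizeL ts

/-- All admissible cuts of a forest (a choice of admissible cut of each tree). -/
def cutsF : List RTree → List (List CutShape)
  | [] => [[]]
  | .node l :: ts =>
      (CutShape.full :: (cutsF l).map CutShape.branch).flatMap
        fun c => (cutsF ts).map (c :: ·)

/-- The root part `R_C(F)` of a cut. -/
def Rcut : List RTree → List CutShape → List RTree
  | [], _ => []
  | _ :: _, [] => []
  | .node _ :: ts, .full :: cs => Rcut ts cs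
  | .node l :: ts, .branch ds :: cs => RTree.node (Rcut l ds) :: Rcut ts cs

/-- The pruned part `P_C(F)` of a cut. -/
def Pcut : List RTree → List CutShape → List RTree
  | [], _ => []
  | _ :: _, [] => []
  | .node l :: ts, .full :: cs => RTree.node l :: Pcut ts cs
  | .node l :: ts, .branch ds :: cs => Pcut l ds ++ Pcut ts cs

/-- Number of `full`s occurring in a cut. -/
def fullsL : List CutShape → ℕ
  | [] => 0
  | .full :: cs => 1 + fullsL cs
  | .branch ds :: cs => fullsL ds + fullsL cs

/-- A list of concrete forests containing (representatives of) every forest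
with at most `n` vertices. -/
def forestsUpTo : ℕ → List (List RTree)
  | 0 => [[]]
  | n+1 => [] :: (forestsUpTo n).flatMap fun l => (forestsUpTo n).map fun F => RTree.node l :: F

/-- Isomorphism of rooted trees (non-planar): a root-preserving bijection, i.e.
the lists of subtrees agree up to permutation and isomorphism. -/
inductive Iso : RTree → RTree → Prop
  | node {l₁ l l₂ : List RTree} : List.Forall₂ Iso l₁ l → l.Perm l₂ → Iso (.node l₁) (.node l₂)

/-- Isomorphism classes of rooted trees. -/
abbrev TreeClass : Type := Quot Iso

/-- Isomorphism classes of rooted forests = multisets of tree classes.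
The empty forest is `0`. -/
abbrev ForestClass : Type := Multiset TreeClass

/-- Isomorphism class of a tree. -/
def clT (t : RTree) : TreeClass := Quot.mk _ t

/-- Isomorphism class of a forest. -/
def clF (F : List RTree) : ForestClass := (F.map clT : List TreeClass)

/-- A concrete representative of a forest class. -/
noncomputable def repF (M : ForestClass) : List RTree := M.toList.map Quot.out

/-- A concrete representative of a tree class. -/
noncomputable def repT (T : TreeClass) : RTree := T.out

/-- Number of vertices of a forest class. -/
noncomputable def sizeC (M : ForestClass) : ℕ := sizeL (repF M)

/-- Number of vertices of a tree class. -/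
noncomputable def sizeT (T : TreeClass) : ℕ := sizeL [repT T]

/-- The Hall algebra `H`: finitely supported ℚ-valued functions on
isomorphism classes of rooted forests, with basis the delta functions. -/
abbrev H : Type := ForestClass →₀ ℚ

/-- The basis element `δ_A` of `H`. -/
noncomputable def delta (A : ForestClass) : H := Finsupp.single A 1

/-- `n(A,B;M)`: the number of admissible cuts `C` of `M` with
`P_C(M) ≅ A` and `R_C(M) ≅ B`. -/
noncomputable def nCuts (A B M : ForestClass) : ℕ :=
  (cutsF (repF M)).countP fun c =>
    decide (clF (Pcut (repF M) c) = A ∧ clF (Rcut (repF M) c) = B)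

/-- A finite set of forest classes containing all classes with at most `n`
vertices. -/
noncomputable def forestCand (n : ℕ) : Finset ForestClass :=
  ((forestsUpTo n).map clF).toFinset

/-- A finite set of tree classes containing all classes with at most `n+1`
vertices. -/
noncomputable def treeCand (n : ℕ) : Finset TreeClass :=
  ((forestsUpTo n).map fun F => clT (RTree.node F)).toFinset

/-- The Hall product on basis elements: `δ_A × δ_B = Σ_M n(A,B;M)·δ_M`
(every `M` with `n(A,B;M) ≠ 0` has exactly `sizeC A + sizeC B` vertices). -/
noncomputable def mulBasis (A B : ForestClass) : H :=
  ∑ M ∈ forestCand (sizeC A + sizeC B), (nCuts A B M : ℚ) • delta M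

/-- The Hall product on `H`, extended bilinearly from basis elements. -/
noncomputable def hmul (f g : H) : H :=
  f.sum fun A a => g.sum fun B b => (a * b) • mulBasis A B

/-- The Connes-Kreimer Lie algebra `n_T` (as a vector space): the span of
isomorphism classes of rooted trees. -/
abbrev nT : Type := TreeClass →₀ ℚ

/-- The basis element of `n_T` corresponding to a rooted tree `T`. -/
noncomputable def tau (T : TreeClass) : nT := Finsupp.single T 1

/-- `a(T₁,T₂;T)`: the number of edges `e` of `T` such that the single-edge cut
at `e` has pruned part `≅ T₁` and root part `≅ T₂`. -/
noncomputable def aCount (T₁ T₂ T : TreeClass) : ℕ :=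
  (cutsF [repT T]).countP fun c =>
    decide (fullsL c = 1 ∧ clF (Pcut [repT T] c) = ({T₁} : Multiset TreeClass)
      ∧ clF (Rcut [repT T] c) = ({T₂} : Multiset TreeClass))

/-- The grafting (pre-Lie) product on basis elements:
`T₁ * T₂ = Σ_T a(T₁,T₂;T)·T`. -/
noncomputable def graftBasis (T₁ T₂ : TreeClass) : nT :=
  ∑ T ∈ treeCand (sizeT T₁ + sizeT T₂), (aCount T₁ T₂ T : ℚ) • tau T

/-- The grafting (pre-Lie) product on `n_T`, extended bilinearly. -/
noncomputable def graft (x y : nT) : nT :=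
  x.sum fun T₁ a => y.sum fun T₂ b => (a * b) • graftBasis T₁ T₂

/-- The Connes-Kreimer bracket `[x,y] = x*y - y*x` on `n_T`. -/
noncomputable def ckBracket (x y : nT) : nT := graft x y - graft y x

/-- `Ẽ_A δ_B = Σ_C δ_{R_C(B)}`, the sum over admissible cuts `C` of `B` with
`P_C(B) ≅ A`. -/
noncomputable def elimBasis (A B : ForestClass) : H :=
  (((cutsF (repF B)).filter fun c => decide (clF (Pcut (repF B) c) = A)).map
    fun c => delta (clF (Rcut (repF B) c))).sum

/-- The elimination operator `E_A` (here on `H ≅ H*`, identifying `φ_B` with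
`δ_B`). -/
noncomputable def elim (A : ForestClass) : H →ₗ[ℚ] H :=
  Finsupp.lsum ℚ fun B => LinearMap.toSpanSingleton ℚ H (elimBasis A B)

/-- `Ẽ^top_A δ_B = Σ_C δ_{P_C(B)}`, the sum over admissible cuts `C` of `B`
with `R_C(B) ≅ A`. -/
noncomputable def topElimBasis (A B : ForestClass) : H :=
  (((cutsF (repF B)).filter fun c => decide (clF (Rcut (repF B) c) = A)).map
    fun c => delta (clF (Pcut (repF B) c))).sum

/-- The top-elimination operator `E^top_A`. -/
noncomputable def topElim (A : ForestClass) : H →ₗ[ℚ] H :=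
  Finsupp.lsum ℚ fun B => LinearMap.toSpanSingleton ℚ H (topElimBasis A B)

/-- `H ⊗ H`, realized as finitely supported functions on pairs of classes. -/
abbrev H2 : Type := (ForestClass × ForestClass) →₀ ℚ

/-- `Δ(δ_M) = Σ δ_A ⊗ δ_B`, the sum over ordered pairs `(A,B)` of classes with
`A ⊔ B ≅ M`. -/
noncomputable def deltaBasis (M : ForestClass) : H2 :=
  ∑ A ∈ M.powerset.toFinset, Finsupp.single (A, M - A) 1

/-- The coproduct `Δ : H → H ⊗ H`. -/
noncomputable def coprod : H →ₗ[ℚ] H2 :=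
  Finsupp.lsum ℚ fun M => LinearMap.toSpanSingleton ℚ H2 (deltaBasis M)

/-- `H_quot(M)`: the subspace of `H* ≅ H` spanned by
`{φ_{R_C(M)} : C an admissible cut of M}` (the quotients of `M`). -/
noncomputable def Hquot (M : ForestClass) : Submodule ℚ H :=
  Submodule.span ℚ
    {v : H | ∃ c ∈ cutsF (repF M), v = delta (clF (Rcut (repF M) c))}

/-!
Vertex count is additive over an admissible cut, `|P_C(B)| + |R_C(B)| = |B|`, so a cut of `B`
with pruned part `≅ A` exists only if `|A| ≤ |B|`, and when `|A| = |B|` it is the full cut, forcing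
`A ≅ B` and `R_C(B) = ∅`. Hence, for `w ≠ 0` and `B` of maximal size in the support of `w`,
`E_B w` is a nonzero multiple of `φ_∅`. So every nonzero `E`-stable subspace contains `φ_∅`,
and two nonzero stable subspaces always meet.
-/

lemma sizeL_nil : sizeL [] = 0 := by simp [sizeL]

lemma sizeL_cons (t : RTree) (F : List RTree) : sizeL (t :: F) = sizeL [t] + sizeL F := by
  cases t
  simp only [sizeL]
  omega

lemma sizeL_append : ∀ F G : List RTree, sizeL (F ++ G) = sizeL F + sizeL G
  | [], _ => by rw [List.nil_append, sizeL_nil, Nat.zero_add]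
  | t :: F, G => by
    rw [List.cons_append, sizeL_cons t, sizeL_cons t F, sizeL_append F G, Nat.add_assoc]

lemma sizeL_eq_sum : ∀ F : List RTree, sizeL F = (F.map fun t => sizeL [t]).sum
  | [] => sizeL_nil
  | t :: F => by rw [sizeL_cons t F, List.map_cons, List.sum_cons, sizeL_eq_sum F]

lemma eq_nil_of_sizeL_eq_zero : ∀ {F : List RTree}, sizeL F = 0 → F = []
  | [], _ => rfl
  | .node _ :: _, h => by simp [sizeL] at h

lemma sizeL_eq_of_perm {F G : List RTree} (h : F.Perm G) : sizeL F = sizeL G := by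
  rw [sizeL_eq_sum, sizeL_eq_sum]
  exact (h.map _).sum_eq

mutual

lemma Iso.sizeL_eq : ∀ {t u : RTree}, Iso t u → sizeL [t] = sizeL [u]
  | .node _, .node _, .node hf hp => by
    simp only [sizeL]
    rw [sizeL_eq_of_forall₂_iso hf, sizeL_eq_of_perm hp]

lemma sizeL_eq_of_forall₂_iso : ∀ {F G : List RTree}, List.Forall₂ Iso F G → sizeL F = sizeL G
  | [], [], .nil => rfl
  | t :: F, u :: G, .cons h hs => by
    rw [sizeL_cons t F, sizeL_cons u G, h.sizeL_eq, sizeL_eq_of_forall₂_iso hs]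

end

lemma sizeT_clT (t : RTree) : sizeT (clT t) = sizeL [t] := by
  have h : ∀ T : TreeClass, sizeT T = Quot.lift (fun t => sizeL [t]) (fun _ _ => Iso.sizeL_eq) T :=
    fun T => by
      conv_rhs => rw [← Quot.out_eq T]
      rfl
  rw [h]
  rfl

lemma sizeC_eq_sum (M : ForestClass) : sizeC M = (M.map sizeT).sum := by
  conv_rhs => rw [← Multiset.coe_toList M]
  rw [sizeC, repF, sizeL_eq_sum, List.map_map, Multiset.map_coe, Multiset.sum_coe]
  rfl

lemma sizeC_clF (F : List RTree) : sizeC (clF F) = sizeL F := by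
  rw [sizeC_eq_sum, clF, Multiset.map_coe, Multiset.sum_coe, List.map_map, sizeL_eq_sum]
  exact congrArg List.sum (List.map_congr_left fun t _ => sizeT_clT t)

lemma clF_repF (M : ForestClass) : clF (repF M) = M := by
  rw [clF, repF, List.map_map]
  conv_rhs => rw [← Multiset.coe_toList M]
  exact congrArg _ ((List.map_congr_left fun T _ => Quot.out_eq T).trans (List.map_id _))

lemma mem_cutsF_cons {l F : List RTree} {c : List CutShape} :
    c ∈ cutsF (.node l :: F) ↔
      (∃ cs ∈ cutsF F, c = .full :: cs) ∨
      (∃ ds ∈ cutsF l, ∃ cs ∈ cutsF F, c = .branch ds :: cs) := by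
  simp only [cutsF, List.mem_flatMap, List.mem_cons, List.mem_map]
  constructor
  · rintro ⟨a, rfl | ⟨ds, hds, rfl⟩, cs, hcs, rfl⟩
    · exact Or.inl ⟨cs, hcs, rfl⟩
    · exact Or.inr ⟨ds, hds, cs, hcs, rfl⟩
  · rintro (⟨cs, hcs, rfl⟩ | ⟨ds, hds, cs, hcs, rfl⟩)
    · exact ⟨.full, Or.inl rfl, cs, hcs, rfl⟩
    · exact ⟨.branch ds, Or.inr ⟨ds, hds, rfl⟩, cs, hcs, rfl⟩

lemma sizeL_Pcut_add_sizeL_Rcut :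
    ∀ {F : List RTree} {c : List CutShape}, c ∈ cutsF F →
      sizeL (Pcut F c) + sizeL (Rcut F c) = sizeL F
  | [], _, _ => by simp only [Pcut, Rcut, sizeL_nil]
  | .node l :: F, _, hc => by
    rcases mem_cutsF_cons.mp hc with ⟨cs, hcs, rfl⟩ | ⟨ds, hds, cs, hcs, rfl⟩
    · have := sizeL_Pcut_add_sizeL_Rcut hcs
      simp only [Pcut, Rcut, sizeL]
      omega
    · have := sizeL_Pcut_add_sizeL_Rcut hcs
      have := sizeL_Pcut_add_sizeL_Rcut hds
      simp only [Pcut, Rcut, sizeL, sizeL_append]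
      omega

lemma Pcut_eq_self_of_Rcut_eq_nil :
    ∀ {F : List RTree} {c : List CutShape}, c ∈ cutsF F → Rcut F c = [] → Pcut F c = F
  | [], _, _, _ => by simp only [Pcut]
  | .node l :: F, _, hc, hR => by
    rcases mem_cutsF_cons.mp hc with ⟨cs, hcs, rfl⟩ | ⟨ds, hds, cs, hcs, rfl⟩
    · rw [Rcut] at hR
      rw [Pcut, Pcut_eq_self_of_Rcut_eq_nil hcs hR]
    · simp only [Rcut, reduceCtorEq] at hR

lemma Pcut_eq_self_of_sizeL_le {F : List RTree} {c : List CutShape} (hc : c ∈ cutsF F)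
    (hle : sizeL F ≤ sizeL (Pcut F c)) : Pcut F c = F ∧ Rcut F c = [] := by
  have hR : Rcut F c = [] := by
    have := sizeL_Pcut_add_sizeL_Rcut hc
    exact eq_nil_of_sizeL_eq_zero (by omega)
  exact ⟨Pcut_eq_self_of_Rcut_eq_nil hc hR, hR⟩

def fullCut (F : List RTree) : List CutShape := F.map fun _ => .full

lemma fullCut_mem_cutsF : ∀ F : List RTree, fullCut F ∈ cutsF F
  | [] => by simp [fullCut, cutsF]
  | .node l :: F => mem_cutsF_cons.mpr (Or.inl ⟨fullCut F, fullCut_mem_cutsF F, rfl⟩)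

lemma Pcut_fullCut : ∀ F : List RTree, Pcut F (fullCut F) = F
  | [] => by simp only [Pcut]
  | .node l :: F => by
    change Pcut (.node l :: F) (.full :: fullCut F) = _
    rw [Pcut, Pcut_fullCut F]

lemma clF_Pcut_eq_self_of_sizeC_le {B : ForestClass} {c : List CutShape}
    (hc : c ∈ cutsF (repF B)) (hle : sizeC B ≤ sizeC (clF (Pcut (repF B) c))) :
    clF (Pcut (repF B) c) = B ∧ clF (Rcut (repF B) c) = 0 := by
  rw [sizeC_clF] at hle
  obtain ⟨hP, hR⟩ := Pcut_eq_self_of_sizeL_le hc hle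
  rw [hP, hR, clF_repF]
  exact ⟨rfl, rfl⟩

lemma elimBasis_eq_zero_of_sizeC_le {A B : ForestClass} (hle : sizeC B ≤ sizeC A) (hne : B ≠ A) :
    elimBasis A B = 0 := by
  suffices h : (cutsF (repF B)).filter (fun c => decide (clF (Pcut (repF B) c) = A)) = [] by
    rw [elimBasis, h, List.map_nil, List.sum_nil]
  refine List.filter_eq_nil_iff.mpr fun c hc hA => hne ?_
  rw [decide_eq_true_iff] at hA
  subst hA
  exact (clF_Pcut_eq_self_of_sizeC_le hc hle).1.symm

lemma exists_elimBasis_self_eq_smul (B : ForestClass) :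
    ∃ k : ℕ, 0 < k ∧ elimBasis B B = (k : ℚ) • delta 0 := by
  set L := (cutsF (repF B)).filter fun c => decide (clF (Pcut (repF B) c) = B) with hL
  have hfull : fullCut (repF B) ∈ L :=
    List.mem_filter.mpr ⟨fullCut_mem_cutsF _, by rw [Pcut_fullCut, clF_repF, decide_eq_true_iff]⟩
  refine ⟨L.length, List.length_pos_of_mem hfull, ?_⟩
  have hR : ∀ c ∈ L, delta (clF (Rcut (repF B) c)) = delta 0 := fun c hc => by
    obtain ⟨hc, hB⟩ := List.mem_filter.mp hc
    rw [decide_eq_true_iff] at hB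
    rw [(clF_Pcut_eq_self_of_sizeC_le hc (congrArg sizeC hB).ge).2]
  rw [elimBasis, ← hL, List.map_congr_left hR, List.map_const', List.sum_replicate,
    Nat.cast_smul_eq_nsmul]

lemma exists_elim_eq_smul_delta_zero {w : H} {B : ForestClass} (hB : B ∈ w.support)
    (hmax : ∀ B' ∈ w.support, sizeC B' ≤ sizeC B) :
    ∃ q : ℚ, q ≠ 0 ∧ elim B w = q • delta 0 := by
  obtain ⟨k, hk, hEB⟩ := exists_elimBasis_self_eq_smul B
  refine ⟨w B * k, mul_ne_zero (Finsupp.mem_support_iff.mp hB) (by exact_mod_cast hk.ne'), ?_⟩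
  have hsum : elim B w = w.sum fun B' b => b • elimBasis B B' := by
    simp [elim, Finsupp.lsum_apply, LinearMap.toSpanSingleton_apply, Finsupp.sum]
  rw [hsum, Finsupp.sum_eq_single B, hEB, smul_smul]
  · exact fun B' hB' hne => by
      rw [elimBasis_eq_zero_of_sizeC_le (hmax B' (Finsupp.mem_support_iff.mpr hB')) hne, smul_zero]
  · exact fun _ => zero_smul ℚ _

lemma delta_zero_mem_of_elim_mem (U : Submodule ℚ H)
    (hU : ∀ A : ForestClass, ∀ w ∈ U, elim A w ∈ U) (hne : U ≠ ⊥) : delta 0 ∈ U := by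
  obtain ⟨w, hwU, hw⟩ := Submodule.exists_mem_ne_zero_of_ne_bot hne
  obtain ⟨B, hB, hmax⟩ :=
    w.support.exists_max_image sizeC (Finsupp.support_nonempty_iff.mpr hw)
  obtain ⟨q, hq, hEw⟩ := exists_elim_eq_smul_delta_zero hB hmax
  have h := U.smul_mem q⁻¹ (hU B w hwU)
  rwa [hEw, smul_smul, inv_mul_cancel₀ hq, one_smul] at h

/-- STATEMENT 15: for `M` a rooted tree (an indecomposable object), every
nonzero subspace of `H_quot(M)` stable under all elimination operators `E_A`
contains `φ_∅`; consequently `H_quot(M)` is indecomposable: it is not the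
direct sum of two nonzero stable subspaces. -/
theorem Hquot_indecomposable (M : TreeClass) :
    (∀ U : Submodule ℚ H, U ≤ Hquot ({M} : Multiset TreeClass) →
      (∀ A : ForestClass, ∀ w ∈ U, elim A w ∈ U) → U ≠ ⊥ → delta 0 ∈ U) ∧
    (∀ U W : Submodule ℚ H,
      U ≤ Hquot ({M} : Multiset TreeClass) → W ≤ Hquot ({M} : Multiset TreeClass) →
      (∀ A : ForestClass, ∀ w ∈ U, elim A w ∈ U) →
      (∀ A : ForestClass, ∀ w ∈ W, elim A w ∈ W) →
      U ⊓ W = ⊥ → U ⊔ W = Hquot ({M} : Multiset TreeClass) →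
      U = ⊥ ∨ W = ⊥) := by
  refine ⟨fun U _ hU hne => delta_zero_mem_of_elim_mem U hU hne, ?_⟩
  intro U W _ _ hU hW hUW _
  by_contra! h
  have hmem : delta 0 ∈ U ⊓ W :=
    ⟨delta_zero_mem_of_elim_mem U hU h.1, delta_zero_mem_of_elim_mem W hW h.2⟩
  rw [hUW, Submodule.mem_bot, delta, Finsupp.single_eq_zero] at hmem
  exact one_ne_zero hmem

end CK
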